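/- Let G be a graph such that for every positive definite matrix A with zeros at the non-edges of G and for every subgraph H of G, the thresholded matrix A_H is positive definite. Then G contains no cycle, i.e., G is a forest. -/

import Mathlib

def threshold {n : ℕ} (G : SimpleGraph (Fin n)) [DecidableRel G.Adj]
    (A : Matrix (Fin n) (Fin n) ℝ) : Matrix (Fin n) (Fin n) ℝ :=
  Matrix.of fun i j => if i = j ∨ G.Adj i j then A i j else 0

/-!
Suppose `G` contains a cycle `v 0, …, v c` (`c ≥ 2`), and let `w_l = e_{v l} - e_{v (l+1)}`.
The matrix `δ I + ∑_{l<c} w_l w_lᵀ - c⁻¹ (∑ w_l)(∑ w_l)ᵀ` with `δ = (c (c+1))⁻¹` is supported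
on the cycle, and it is positive definite because, by Cauchy–Schwarz, the subtracted term is
dominated by the sum. Its entry at the closing edge `{v 0, v c}` is `c⁻¹`. Deleting that edge
lowers the quadratic form at the indicator vector of the cycle by `2 c⁻¹`, while the form
itself is only `δ (c+1) = c⁻¹` there, since every `w_l` is orthogonal to that vector.
-/

open Finset Matrix

section QuadraticForm

variable {m : Type*} [Fintype m]

lemma dotProduct_vecMulVec_mulVec (p q x : m → ℝ) :
    x ⬝ᵥ (vecMulVec p q *ᵥ x) = (p ⬝ᵥ x) * (q ⬝ᵥ x) := by
  simp [vecMulVec_mulVec, dotProduct_smul, dotProduct_comm x p, mul_comm]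

lemma dotProduct_single_mulVec [DecidableEq m] (a b : m) (r : ℝ) (x : m → ℝ) :
    x ⬝ᵥ (single a b r *ᵥ x) = x a * r * x b := by
  simp [single_mulVec_eq, mul_comm, mul_left_comm]

/-- Cauchy–Schwarz: `d (∑ aᵢ)² ≤ d #s ∑ aᵢ² ≤ ∑ aᵢ²`. -/
theorem posDef_smul_one_add_sum_vecMulVec_sub [DecidableEq m] {ι : Type*} (s : Finset ι)
    (u : ι → m → ℝ) {δ d : ℝ} (hδ : 0 < δ) (hd : d * #s ≤ 1) :
    (δ • 1 + ∑ i ∈ s, vecMulVec (u i) (u i)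
      - d • vecMulVec (∑ i ∈ s, u i) (∑ i ∈ s, u i)).PosDef := by
  refine .of_dotProduct_mulVec_pos ?_ fun x hx => ?_
  · ext i j
    simp [vecMulVec_apply, Matrix.sum_apply, mul_comm, one_apply, eq_comm]
  simp only [star_trivial, sub_mulVec, add_mulVec, sum_mulVec, dotProduct_sub, dotProduct_add,
    dotProduct_sum, smul_mulVec, dotProduct_smul, one_mulVec, dotProduct_vecMulVec_mulVec,
    sum_dotProduct, smul_eq_mul, ← sq]
  have hxx : 0 < x ⬝ᵥ x := by simpa using dotProduct_star_self_pos_iff.mpr hx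
  have hcs := sq_sum_le_card_mul_sum_sq (s := s) (f := fun i => u i ⬝ᵥ x)
  have hsq : 0 ≤ ∑ i ∈ s, (u i ⬝ᵥ x) ^ 2 := sum_nonneg fun i _ => sq_nonneg _
  rcases le_or_gt d 0 with hd0 | hd0
  · nlinarith [mul_pos hδ hxx, sq_nonneg (∑ i ∈ s, u i ⬝ᵥ x)]
  · nlinarith [mul_pos hδ hxx, mul_le_mul_of_nonneg_left hcs hd0.le]

end QuadraticForm

section CycleWitness

variable {V : Type*} [DecidableEq V]

def edgeVec (p q : V) : V → ℝ := Pi.single p 1 - Pi.single q 1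

lemma edgeVec_dotProduct [Fintype V] (p q : V) (x : V → ℝ) : edgeVec p q ⬝ᵥ x = x p - x q := by
  simp [edgeVec, sub_dotProduct]

lemma vecMulVec_edgeVec_apply_of_ne (p q : V) {i j : V} (hij : i ≠ j) :
    vecMulVec (edgeVec p q) (edgeVec p q) i j = if s(i, j) = s(p, q) then -1 else 0 := by
  simp only [vecMulVec_apply, edgeVec, Pi.sub_apply, Pi.single_apply, Sym2.eq_iff]
  grind

lemma sum_range_edgeVec (v : ℕ → V) (c : ℕ) :
    ∑ i ∈ range c, edgeVec (v i) (v (i + 1)) = edgeVec (v 0) (v c) :=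
  sum_range_sub' (fun i => Pi.single (v i) 1) c

noncomputable def cycleWitness (v : ℕ → V) (c : ℕ) : Matrix V V ℝ :=
  ((c : ℝ) * (c + 1))⁻¹ • 1
    + ∑ i ∈ range c, vecMulVec (edgeVec (v i) (v (i + 1))) (edgeVec (v i) (v (i + 1)))
    - (c : ℝ)⁻¹ • vecMulVec (edgeVec (v 0) (v c)) (edgeVec (v 0) (v c))

variable (v : ℕ → V) {c : ℕ}

lemma cycleWitness_apply_of_ne (c : ℕ) {i j : V} (hij : i ≠ j) :
    cycleWitness v c i j = (∑ l ∈ range c, if s(i, j) = s(v l, v (l + 1)) then -1 else 0)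
      + if s(i, j) = s(v 0, v c) then (c : ℝ)⁻¹ else 0 := by
  simp only [cycleWitness, Matrix.sub_apply, Matrix.add_apply, Matrix.smul_apply,
    one_apply_ne hij, Matrix.sum_apply, vecMulVec_edgeVec_apply_of_ne _ _ hij, smul_eq_mul]
  split_ifs <;> ring

lemma cycleWitness_apply_eq_zero {G : SimpleGraph V} (hpath : ∀ l < c, G.Adj (v l) (v (l + 1)))
    (hclose : G.Adj (v c) (v 0)) {i j : V} (hij : i ≠ j) (hG : ¬G.Adj i j) :
    cycleWitness v c i j = 0 := by
  have hne : ∀ a b, G.Adj a b → s(i, j) ≠ s(a, b) := fun a b hab h =>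
    hG (by rwa [← SimpleGraph.mem_edgeSet, h])
  rw [cycleWitness_apply_of_ne v c hij, if_neg (hne _ _ hclose.symm), add_zero]
  exact sum_eq_zero fun l hl => if_neg (hne _ _ (hpath l (mem_range.mp hl)))

lemma cycleWitness_apply_of_sym2_eq (hc : 2 ≤ c) (hinj : Set.InjOn v (Set.Iic c))
    {i j : V} (hij : s(i, j) = s(v 0, v c)) : cycleWitness v c i j = (c : ℝ)⁻¹ := by
  have hv : ∀ a b, a ≤ c → b ≤ c → v a = v b → a = b := fun a b ha hb h =>
    hinj (Set.mem_Iic.mpr ha) (Set.mem_Iic.mpr hb) h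
  have h0c : v 0 ≠ v c := fun h => by have := hv 0 c c.zero_le le_rfl h; omega
  have hne : i ≠ j := fun h => h0c (Sym2.mk_isDiag_iff.mp (hij ▸ Sym2.mk_isDiag_iff.mpr h))
  rw [cycleWitness_apply_of_ne v c hne, if_pos hij, sum_eq_zero, zero_add]
  intro l hl
  rw [mem_range] at hl
  refine if_neg ?_
  rw [hij, Sym2.eq_iff]
  rintro (⟨h1, h2⟩ | ⟨h1, h2⟩)
  · have := hv 0 l (by omega) (by omega) h1
    have := hv c (l + 1) le_rfl (by omega) h2
    omega
  · have := hv 0 (l + 1) (by omega) (by omega) h1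
    omega

variable [Fintype V]

lemma cycleWitness_posDef (hc : 0 < c) : (cycleWitness v c).PosDef := by
  rw [cycleWitness, ← sum_range_edgeVec]
  refine posDef_smul_one_add_sum_vecMulVec_sub _ _ (by positivity) ?_
  rw [card_range, inv_mul_cancel₀ (by positivity)]

lemma dotProduct_cycleWitness_mulVec_of_eq_one {t : V → ℝ} (ht : ∀ i ≤ c, t (v i) = 1) :
    t ⬝ᵥ (cycleWitness v c *ᵥ t) = ((c : ℝ) * (c + 1))⁻¹ * (t ⬝ᵥ t) := by
  have hedge : ∀ a b, a ≤ c → b ≤ c → edgeVec (v a) (v b) ⬝ᵥ t = 0 := fun a b ha hb => by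
    rw [edgeVec_dotProduct, ht a ha, ht b hb, sub_self]
  simp only [cycleWitness, sub_mulVec, add_mulVec, sum_mulVec, dotProduct_sub, dotProduct_add,
    dotProduct_sum, smul_mulVec, dotProduct_smul, one_mulVec, dotProduct_vecMulVec_mulVec,
    smul_eq_mul, hedge 0 c (Nat.zero_le c) le_rfl]
  rw [sum_eq_zero fun l hl => by
    rw [hedge l (l + 1) (by simp at hl; omega) (by simp at hl; omega)]; ring]
  ring

end CycleWitness

lemma indicator_dotProduct_self {V : Type*} [Fintype V] [DecidableEq V] (S : Finset V) :
    (fun a => if a ∈ S then (1 : ℝ) else 0) ⬝ᵥ (fun a => if a ∈ S then (1 : ℝ) else 0) = #S := by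
  simp [dotProduct]

lemma SimpleGraph.exists_cycle_of_not_isAcyclic {V : Type*} {G : SimpleGraph V}
    (hG : ¬G.IsAcyclic) :
    ∃ (c : ℕ) (v : ℕ → V), 2 ≤ c ∧ Set.InjOn v (Set.Iic c) ∧
      (∀ l < c, G.Adj (v l) (v (l + 1))) ∧ G.Adj (v c) (v 0) := by
  simp only [SimpleGraph.IsAcyclic, not_forall, not_not] at hG
  obtain ⟨u, p, hp⟩ := hG
  have h3 := hp.three_le_length
  refine ⟨p.length - 1, p.getVert, by omega, fun a ha b hb => hp.getVert_injOn' ha hb,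
    fun l hl => p.adj_getVert_succ (by omega), ?_⟩
  have := p.adj_getVert_succ (i := p.length - 1) (by omega)
  rw [p.getVert_zero]
  rwa [Nat.sub_add_cancel (by omega), p.getVert_length] at this

lemma threshold_deleteEdges_eq_sub_single {n : ℕ} {G : SimpleGraph (Fin n)}
    {A : Matrix (Fin n) (Fin n) ℝ} (hA : ∀ i j, i ≠ j → ¬G.Adj i j → A i j = 0)
    {a b : Fin n} (hab : a ≠ b)
    [DecidableRel (G.deleteEdges {s(a, b)}).Adj] :
    threshold (G.deleteEdges {s(a, b)}) A = A - single a b (A a b) - single b a (A b a) := by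
  ext i j
  have hadj : (G.deleteEdges {s(a, b)}).Adj i j ↔ G.Adj i j ∧ s(i, j) ≠ s(a, b) := by simp
  simp only [threshold, of_apply, Matrix.sub_apply, single_apply] at hadj ⊢
  split_ifs <;> grind

lemma not_posDef_threshold_cycleWitness {n : ℕ} {G : SimpleGraph (Fin n)} (v : ℕ → Fin n)
    {c : ℕ} (hc : 2 ≤ c) (hinj : Set.InjOn v (Set.Iic c))
    (hpath : ∀ l < c, G.Adj (v l) (v (l + 1))) (hclose : G.Adj (v c) (v 0))
    [DecidableRel (G.deleteEdges {s(v 0, v c)}).Adj] :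
    ¬(threshold (G.deleteEdges {s(v 0, v c)}) (cycleWitness v c)).PosDef := by
  intro hT
  set t : Fin n → ℝ := fun a => if a ∈ (range (c + 1)).image v then 1 else 0
  have ht : ∀ i ≤ c, t (v i) = 1 := fun i hi =>
    if_pos (mem_image_of_mem v (mem_range.mpr (by omega)))
  have htt : t ⬝ᵥ t ≤ c + 1 := by
    rw [indicator_dotProduct_self]
    exact_mod_cast card_image_le.trans (card_range _).le
  have hpos := hT.dotProduct_mulVec_pos (x := t) fun h => by simpa [h] using ht 0 c.zero_le
  rw [star_trivial,
    threshold_deleteEdges_eq_sub_single (fun i j => cycleWitness_apply_eq_zero v hpath hclose)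
      hclose.ne.symm, sub_mulVec, sub_mulVec, dotProduct_sub, dotProduct_sub,
    dotProduct_single_mulVec, dotProduct_single_mulVec,
    cycleWitness_apply_of_sym2_eq v hc hinj rfl,
    cycleWitness_apply_of_sym2_eq v hc hinj Sym2.eq_swap,
    ht 0 c.zero_le, ht c le_rfl, dotProduct_cycleWitness_mulVec_of_eq_one v ht] at hpos
  have hc' : (0 : ℝ) < c := by exact_mod_cast (by omega : 0 < c)
  have hle : ((c : ℝ) * (c + 1))⁻¹ * (t ⬝ᵥ t) ≤ (c : ℝ)⁻¹ := calc
    _ ≤ ((c : ℝ) * (c + 1))⁻¹ * (c + 1) := by gcongr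
    _ = (c : ℝ)⁻¹ := by field_simp
  linarith [inv_pos.mpr hc']

theorem stmt_13 {n : ℕ} (G : SimpleGraph (Fin n))
    (h : ∀ A : Matrix (Fin n) (Fin n) ℝ, A.PosDef →
      (∀ i j : Fin n, i ≠ j → ¬ G.Adj i j → A i j = 0) →
      ∀ (H : SimpleGraph (Fin n)) (_ : DecidableRel H.Adj), H ≤ G →
        (@threshold n H ‹_› A).PosDef) :
    G.IsAcyclic := by
  classical
  by_contra hG
  obtain ⟨c, v, hc, hinj, hpath, hclose⟩ := G.exists_cycle_of_not_isAcyclic hG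
  exact not_posDef_threshold_cycleWitness v hc hinj hpath hclose <|
    h _ (cycleWitness_posDef v (by omega)) (fun i j => cycleWitness_apply_eq_zero v hpath hclose)
      _ inferInstance (G.deleteEdges_le _)
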